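/- arXiv:2302.12218 — 4 statements merged into one kernel-verified Lean document; each statement's English description precedes it below -/
import Mathlib

section
/- For a function F defined on (1,∞), with G(x) = log x · ∑_{n≤x} F(x/n), we have F(x)·log x + ∑_{n≤x} F(x/n)·Λ(n) = ∑_{d≤x} μ(d)·G(x/d), where Λ is the von Mangoldt function and μ is the Möbius function. -/
open Finset ArithmeticFunction

/-!
Expanding `G (x / d) = log (x / d) · ∑_{m ≤ x/d} F (x / (d m))` and collecting the terms with
`d m = n` turns the right-hand side into `∑_{n ≤ x} (∑_{d ∣ n} μ d log (x / d)) F (x / n)`.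
The inner coefficient is `log x · ∑_{d ∣ n} μ d - ∑_{d ∣ n} μ d log d = [n = 1] log x + Λ n`.
-/

theorem sum_Icc_div_mul_eq_sum_filter_dvd {M : Type*} [AddCommMonoid M] {d : ℕ} (hd : 0 < d)
    (N : ℕ) (g : ℕ → M) :
    ∑ m ∈ Icc 1 (N / d), g (d * m) = ∑ n ∈ Icc 1 N with d ∣ n, g n := by
  refine sum_nbij' (d * ·) (· / d) ?_ ?_ (fun m _ => Nat.mul_div_cancel_left m hd) ?_
    fun _ _ => rfl
  · intro m hm
    simp only [mem_filter, mem_Icc] at hm ⊢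
    have hdm : d * m ≤ N := mul_comm m d ▸ (Nat.le_div_iff_mul_le hd).mp hm.2
    exact ⟨⟨Nat.mul_pos hd hm.1, hdm⟩, dvd_mul_right d m⟩
  · intro n hn
    simp only [mem_filter, mem_Icc] at hn ⊢
    obtain ⟨⟨hn1, hnN⟩, k, rfl⟩ := hn
    rw [Nat.mul_div_cancel_left k hd]
    exact ⟨Nat.pos_of_mul_pos_left hn1, (Nat.le_div_iff_mul_le hd).mpr (mul_comm d k ▸ hnN)⟩
  · intro n hn
    exact Nat.mul_div_cancel' (mem_filter.mp hn).2

theorem sum_Icc_sum_divisors_eq_sum_Icc_sum_filter_dvd {M : Type*} [AddCommMonoid M] (N : ℕ)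
    (f : ℕ → ℕ → M) :
    ∑ n ∈ Icc 1 N, ∑ d ∈ n.divisors, f d n = ∑ d ∈ Icc 1 N, ∑ n ∈ Icc 1 N with d ∣ n, f d n := by
  refine sum_comm' fun n d => ?_
  simp only [mem_Icc, Nat.mem_divisors, mem_filter]
  constructor
  · rintro ⟨⟨hn1, hnN⟩, hdn, -⟩
    have := Nat.le_of_dvd hn1 hdn
    exact ⟨⟨⟨hn1, hnN⟩, hdn⟩, Nat.pos_of_dvd_of_pos hdn hn1, by omega⟩
  · rintro ⟨⟨⟨hn1, hnN⟩, hdn⟩, -⟩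
    exact ⟨⟨hn1, hnN⟩, hdn, by omega⟩

theorem sum_Icc_floor_mul_sum_Icc_floor_div_eq_sum_divisors {K R : Type*} [Semifield K] [LinearOrder K]
    [IsStrictOrderedRing K] [FloorSemiring K] [NonUnitalNonAssocSemiring R]
    (x : K) (a : ℕ → R) (F : K → R) :
    ∑ d ∈ Icc 1 ⌊x⌋₊, a d * ∑ m ∈ Icc 1 ⌊x / d⌋₊, F (x / d / m)
      = ∑ n ∈ Icc 1 ⌊x⌋₊, (∑ d ∈ n.divisors, a d) * F (x / n) := by
  simp_rw [sum_mul, sum_Icc_sum_divisors_eq_sum_Icc_sum_filter_dvd, mul_sum, Nat.floor_div_natCast]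
  refine sum_congr rfl fun d hd => ?_
  rw [← sum_Icc_div_mul_eq_sum_filter_dvd (mem_Icc.mp hd).1]
  simp_rw [div_div, Nat.cast_mul]

theorem sum_divisors_moebius_mul_log_div {x : ℝ} (hx : 0 < x) (n : ℕ) :
    ∑ d ∈ n.divisors, (moebius d : ℝ) * Real.log (x / d)
      = (if n = 1 then Real.log x else 0) + Λ n := by
  have hμ : ∑ d ∈ n.divisors, (moebius d : ℝ) = if n = 1 then 1 else 0 := by
    rw [← one_apply, ← coe_moebius_mul_coe_zeta (R := ℝ), coe_mul_zeta_apply]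
    simp
  have hlog : ∀ d ∈ n.divisors, (moebius d : ℝ) * Real.log (x / d)
      = moebius d * Real.log x - moebius d * Real.log d := fun d hd => by
    rw [Real.log_div hx.ne' (Nat.cast_ne_zero.mpr (Nat.pos_of_mem_divisors hd).ne'), mul_sub]
  have hΛ : ∑ d ∈ n.divisors, (moebius d : ℝ) * Real.log d = -Λ n := by
    simpa only [log_apply] using sum_moebius_mul_log_eq
  rw [sum_congr rfl hlog, sum_sub_distrib, ← sum_mul, hμ, hΛ]
  split_ifs <;> ring

theorem tatuzawa_iseki (F : ℝ → ℝ)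
    (G : ℝ → ℝ)
    (hG : ∀ x, G x = Real.log x * ∑ n ∈ Finset.Icc 1 ⌊x⌋₊, F (x / n)) :
    ∀ x : ℝ, 1 ≤ x →
      F x * Real.log x + ∑ n ∈ Finset.Icc 1 ⌊x⌋₊, F (x / n) * Λ n
        = ∑ d ∈ Finset.Icc 1 ⌊x⌋₊, (moebius d : ℝ) * G (x / d) := by
  intro x hx
  symm
  calc ∑ d ∈ Icc 1 ⌊x⌋₊, (moebius d : ℝ) * G (x / d)
      = ∑ n ∈ Icc 1 ⌊x⌋₊, (∑ d ∈ n.divisors, (moebius d : ℝ) * Real.log (x / d)) * F (x / n) := by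
        simp_rw [hG, ← mul_assoc]
        exact sum_Icc_floor_mul_sum_Icc_floor_div_eq_sum_divisors x _ F
    _ = ∑ n ∈ Icc 1 ⌊x⌋₊, ((if n = 1 then Real.log x else 0) + Λ n) * F (x / n) := by
        simp_rw [sum_divisors_moebius_mul_log_div (zero_lt_one.trans_le hx)]
    _ = F x * Real.log x + ∑ n ∈ Icc 1 ⌊x⌋₊, F (x / n) * Λ n := by
        have h1 : 1 ∈ Icc 1 ⌊x⌋₊ := mem_Icc.mpr ⟨le_rfl, Nat.one_le_floor_iff x |>.mpr hx⟩
        simp only [add_mul, sum_add_distrib, ite_mul, zero_mul, sum_ite_eq', if_pos h1]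
        simp only [Nat.cast_one, div_one, mul_comm]
end

section
/- Define Λ₂ := μ * (log)², i.e., Λ₂(n) = ∑_{d|n} μ(d)·(log(n/d))². Then Λ₂ = Λ*Λ + Λ·log, i.e., Λ₂(n) = ∑_{d|n} Λ(d)Λ(n/d) + Λ(n)·log n for all n ≥ 1. -/
open Finset ArithmeticFunction ArithmeticFunction.Moebius

/-!
Multiplication by `log` is a derivation of the Dirichlet ring, since `log (a * b) = log a + log b`.
Applying it to `Λ * ζ = log` gives `log² = (Λ log) * ζ + Λ * log = (Λ log + Λ * Λ) * ζ`,
and Möbius inversion yields `μ * log² = Λ * Λ + Λ log`.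
-/

namespace ArithmeticFunction

open scoped zeta

theorem log_pmul_mul (f g : ArithmeticFunction ℝ) :
    log.pmul (f * g) = log.pmul f * g + f * log.pmul g := by
  ext n
  simp only [pmul_apply, add_apply, mul_apply, Finset.mul_sum, ← Finset.sum_add_distrib]
  refine Finset.sum_congr rfl fun x hx => ?_
  obtain ⟨hmul, hn⟩ := Nat.mem_divisorsAntidiagonal.mp hx
  have hx₁ : (x.1 : ℝ) ≠ 0 := Nat.cast_ne_zero.2 (left_ne_zero_of_mul (hmul ▸ hn))
  have hx₂ : (x.2 : ℝ) ≠ 0 := Nat.cast_ne_zero.2 (right_ne_zero_of_mul (hmul ▸ hn))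
  rw [log_apply, log_apply, log_apply, ← hmul, Nat.cast_mul, Real.log_mul hx₁ hx₂]
  ring

theorem log_pmul_log : log.pmul log = (Λ * Λ + log.pmul Λ) * ζ := by
  calc log.pmul log = log.pmul (Λ * ζ) := by rw [vonMangoldt_mul_zeta]
    _ = log.pmul Λ * ζ + Λ * log := by rw [log_pmul_mul, pmul_comm, pmul_zeta]
    _ = (Λ * Λ + log.pmul Λ) * ζ := by rw [← vonMangoldt_mul_zeta]; ring

theorem moebius_mul_log_pmul_log :
    (μ : ArithmeticFunction ℝ) * log.pmul log = Λ * Λ + log.pmul Λ := by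
  rw [log_pmul_log, mul_comm, mul_assoc, coe_zeta_mul_coe_moebius, mul_one]

end ArithmeticFunction

theorem lambda2_eq_general (n : ℕ) :
    ∑ d ∈ n.divisors, (μ d : ℝ) * (Real.log ((n : ℝ) / d))^2
      = (∑ d ∈ n.divisors, Λ d * Λ (n / d)) + Λ n * Real.log n := by
  have h := congrArg (· n) moebius_mul_log_pmul_log
  simp only [mul_apply, ArithmeticFunction.add_apply, pmul_apply, intCoe_apply, log_apply] at h
  rw [Nat.sum_divisorsAntidiagonal (fun a b => (μ a : ℝ) * (Real.log b * Real.log b)),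
    Nat.sum_divisorsAntidiagonal (fun a b => Λ a * Λ b)] at h
  rw [mul_comm (Λ n), ← h]
  refine Finset.sum_congr rfl fun d hd => ?_
  rw [← Nat.cast_div_charZero (Nat.dvd_of_mem_divisors hd), sq]

theorem lambda2_eq (n : ℕ) (hn : 1 ≤ n) :
    ∑ d ∈ n.divisors, (μ d : ℝ) * (Real.log ((n : ℝ) / d))^2
      = (∑ d ∈ n.divisors, Λ d * Λ (n / d)) + Λ n * Real.log n :=
  lambda2_eq_general n
end

section
/- Let F(x) := ∑_{n≤x} μ(n)·log(x/n). Then F(x)·log x + ∑_{n≤x} F(x/n)·Λ(n) = O(x) as x → ∞. -/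
/-!
Expanding `F (x / n)` and grouping the terms by `k = n * m` turns the convolution sum into
`∑_{k ≤ x} (Λ * μ)(k) log (x / k)`, and `Λ * μ = -μ log` (Möbius inversion of
`∑_{d ∣ n} μ(d) log d = -Λ(n)`). Hence the whole expression equals `∑_{k ≤ x} μ(k) log² (x / k)`,
which is at most `32 x` in absolute value because `log² t ≤ 16 √t` for `t ≥ 1` and
`∑_{k ≤ x} k^{-1/2} ≤ 2 √x`.
-/

open Finset ArithmeticFunction Filter Asymptotics
open scoped ArithmeticFunction.Moebius ArithmeticFunction.zeta

theorem sum_Icc_sum_Icc_div_eq_sum_divisorsAntidiagonal {M : Type*} [AddCommMonoid M]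
    (N : ℕ) (f : ℕ → ℕ → M) :
    ∑ n ∈ Icc 1 N, ∑ m ∈ Icc 1 (N / n), f n m
      = ∑ k ∈ Icc 1 N, ∑ p ∈ k.divisorsAntidiagonal, f p.1 p.2 := by
  set S := (Icc 1 N ×ˢ Icc 1 N).filter fun p => p.1 * p.2 ≤ N
  have hS : ∀ p, p ∈ S ↔ p.1 ∈ Icc 1 N ∧ p.2 ∈ Icc 1 (N / p.1) := by
    rintro ⟨n, m⟩
    simp only [S, mem_filter, mem_product, mem_Icc]
    constructor
    · rintro ⟨⟨hn, hm, -⟩, hnm⟩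
      exact ⟨hn, hm, (Nat.le_div_iff_mul_le (by omega)).2 (by linarith)⟩
    · rintro ⟨hn, hm, hmn⟩
      have hmn' := (Nat.le_div_iff_mul_le (by omega)).1 hmn
      exact ⟨⟨hn, hm, by nlinarith⟩, by linarith⟩
  have hmaps : ∀ p ∈ S, p.1 * p.2 ∈ Icc 1 N := by
    intro p hp
    simp only [S, mem_filter, mem_product, mem_Icc] at hp
    exact mem_Icc.2 ⟨Nat.mul_le_mul hp.1.1.1 hp.1.2.1, hp.2⟩
  have hfiber : ∀ k ∈ Icc 1 N, k.divisorsAntidiagonal = S.filter fun p => p.1 * p.2 = k := by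
    intro k hk
    ext ⟨n, m⟩
    simp only [S, mem_filter, mem_product, mem_Icc, Nat.mem_divisorsAntidiagonal] at hk ⊢
    constructor
    · rintro ⟨rfl, hk0⟩
      have hn := Nat.pos_of_mul_pos_right (Nat.pos_of_ne_zero hk0)
      have hm := Nat.pos_of_mul_pos_left (Nat.pos_of_ne_zero hk0)
      exact ⟨⟨⟨⟨hn, by nlinarith⟩, hm, by nlinarith⟩, hk.2⟩, rfl⟩
    · grind
  rw [← sum_finset_product S _ _ hS (f := fun p => f p.1 p.2), ← sum_fiberwise_of_maps_to hmaps]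
  exact sum_congr rfl fun k hk => by rw [hfiber k hk]

theorem ArithmeticFunction.vonMangoldt_mul_moebius :
    Λ * (μ : ArithmeticFunction ℝ) = -pmul (μ : ArithmeticFunction ℝ) log := by
  have h : pmul (μ : ArithmeticFunction ℝ) log * ζ = -Λ := by
    ext n
    rw [coe_mul_zeta_apply, ArithmeticFunction.neg_apply]
    simpa only [pmul_apply, intCoe_apply, log_apply] using sum_moebius_mul_log_eq
  rw [← neg_eq_iff_eq_neg, ← neg_mul, ← h, mul_assoc, coe_zeta_mul_coe_moebius, mul_one]

theorem Real.log_sq_le_sixteen_mul_sqrt {t : ℝ} (ht : 1 ≤ t) : Real.log t ^ 2 ≤ 16 * √t := by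
  have h := Real.log_le_rpow_div (by positivity : 0 ≤ t) (by norm_num : (0:ℝ) < 4⁻¹)
  calc Real.log t ^ 2 ≤ (t ^ (4⁻¹ : ℝ) / 4⁻¹) ^ 2 := by gcongr; exact Real.log_nonneg ht
    _ = 16 * √t := by
      rw [div_pow, ← Real.rpow_mul_natCast (by positivity), Real.sqrt_eq_rpow]; norm_num; ring

theorem sum_Icc_inv_sqrt_le (N : ℕ) : ∑ k ∈ Icc 1 N, (√k)⁻¹ ≤ 2 * √N := by
  induction N with
  | zero => simp
  | succ n ih =>
    rw [sum_Icc_succ_top (by omega)]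
    have h1 : √n * √(n + 1) ≤ n + 1 / 2 := by
      rw [← Real.sqrt_mul (by positivity)]
      exact Real.sqrt_le_iff.2 ⟨by positivity, by nlinarith⟩
    have h2 : 0 < √(n + 1 : ℝ) := by positivity
    have h3 : √(n + 1 : ℝ) ^ 2 = n + 1 := Real.sq_sqrt (by positivity)
    have htelescope : (√(n + 1 : ℝ))⁻¹ ≤ 2 * √(n + 1) - 2 * √n := by
      rw [inv_le_iff_one_le_mul₀' h2]; nlinarith
    push_cast
    linarith

noncomputable def moebiusLogSum (x : ℝ) : ℝ :=
  ∑ n ∈ Icc 1 ⌊x⌋₊, (μ n : ℝ) * Real.log (x / n)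

theorem sum_moebiusLogSum_div_mul_vonMangoldt (x : ℝ) :
    ∑ n ∈ Icc 1 ⌊x⌋₊, moebiusLogSum (x / n) * Λ n
      = -∑ k ∈ Icc 1 ⌊x⌋₊, (μ k : ℝ) * Real.log k * Real.log (x / k) := by
  calc _ = ∑ n ∈ Icc 1 ⌊x⌋₊, ∑ m ∈ Icc 1 (⌊x⌋₊ / n),
        Λ n * (μ m : ℝ) * Real.log (x / (n * m : ℕ)) := by
        refine sum_congr rfl fun n _ => ?_
        rw [moebiusLogSum, Nat.floor_div_natCast, sum_mul]
        refine sum_congr rfl fun m _ => ?_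
        push_cast
        rw [div_div]
        ring
    _ = ∑ k ∈ Icc 1 ⌊x⌋₊, (Λ * (μ : ArithmeticFunction ℝ)) k * Real.log (x / k) := by
        rw [sum_Icc_sum_Icc_div_eq_sum_divisorsAntidiagonal]
        refine sum_congr rfl fun k _ => ?_
        rw [mul_apply, sum_mul]
        refine sum_congr rfl fun p hp => ?_
        rw [(Nat.mem_divisorsAntidiagonal.1 hp).1, intCoe_apply]
    _ = _ := by simp [vonMangoldt_mul_moebius]

theorem moebiusLogSum_mul_log_add_sum_vonMangoldt (x : ℝ) :
    moebiusLogSum x * Real.log x + ∑ n ∈ Icc 1 ⌊x⌋₊, moebiusLogSum (x / n) * Λ n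
      = ∑ k ∈ Icc 1 ⌊x⌋₊, (μ k : ℝ) * Real.log (x / k) ^ 2 := by
  rw [sum_moebiusLogSum_div_mul_vonMangoldt, moebiusLogSum, sum_mul, ← sub_eq_add_neg,
    ← sum_sub_distrib]
  refine sum_congr rfl fun k hk => ?_
  have hk1 : 1 ≤ k := (mem_Icc.1 hk).1
  have hx : 1 ≤ x := Nat.floor_pos.1 (hk1.trans (mem_Icc.1 hk).2)
  rw [Real.log_div (by positivity) (by positivity)]
  ring

theorem abs_sum_mul_log_div_sq_le {a : ℕ → ℝ} (ha : ∀ k, |a k| ≤ 1) {x : ℝ} (hx : 0 ≤ x) :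
    |∑ k ∈ Icc 1 ⌊x⌋₊, a k * Real.log (x / k) ^ 2| ≤ 32 * x := by
  have hterm : ∀ k ∈ Icc 1 ⌊x⌋₊, |a k * Real.log (x / k) ^ 2| ≤ 16 * √x * (√k)⁻¹ := by
    intro k hk
    have hk1 : (1 : ℝ) ≤ k := mod_cast (mem_Icc.1 hk).1
    have hkx : (k : ℝ) ≤ x := (Nat.cast_le.2 (mem_Icc.1 hk).2).trans (Nat.floor_le hx)
    calc |a k * Real.log (x / k) ^ 2| ≤ Real.log (x / k) ^ 2 := by
          rw [abs_mul, abs_pow, sq_abs]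
          exact mul_le_of_le_one_left (sq_nonneg _) (ha k)
      _ ≤ 16 * √(x / k) := Real.log_sq_le_sixteen_mul_sqrt ((one_le_div (by positivity)).2 hkx)
      _ = 16 * √x * (√k)⁻¹ := by rw [Real.sqrt_div' _ (by positivity)]; ring
  calc _ ≤ ∑ k ∈ Icc 1 ⌊x⌋₊, 16 * √x * (√k)⁻¹ :=
        (abs_sum_le_sum_abs _ _).trans (sum_le_sum hterm)
    _ = 16 * √x * ∑ k ∈ Icc 1 ⌊x⌋₊, (√k)⁻¹ := (mul_sum _ _ _).symm
    _ ≤ 16 * √x * (2 * √x) := by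
        gcongr
        exact (sum_Icc_inv_sqrt_le _).trans (by gcongr; exact Nat.floor_le hx)
    _ = 32 * x := by rw [mul_mul_mul_comm, Real.mul_self_sqrt hx]; ring

theorem F_log_plus_conv
    (F : ℝ → ℝ)
    (hF : ∀ x, F x = ∑ n ∈ Finset.Icc 1 ⌊x⌋₊, (ArithmeticFunction.moebius n : ℝ) * Real.log (x / n)) :
    (fun x : ℝ => F x * Real.log x + ∑ n ∈ Finset.Icc 1 ⌊x⌋₊, F (x / n) * Λ n)
      =O[atTop] (fun x : ℝ => x) := by
  obtain rfl : F = moebiusLogSum := funext hF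
  refine isBigO_iff.2 ⟨32, ?_⟩
  filter_upwards [eventually_ge_atTop 0] with x hx
  rw [moebiusLogSum_mul_log_add_sum_vonMangoldt, Real.norm_eq_abs, Real.norm_of_nonneg hx]
  exact abs_sum_mul_log_div_sq_le (fun _ => mod_cast abs_moebius_le_one) hx
end

section
/- If ∫₁^x M(y)/y dy = o(x) as x → ∞, then M(x) = o(x), i.e., lim_{x→∞} M(x)/x = 0. -/
open Finset ArithmeticFunction Filter
open scoped ArithmeticFunction.Moebius

/-!
Write `F x = ∫₁ˣ M y / y dy`. Since `M` changes by at most `h + 1` on `[x, x + h]`,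
`F (x + h) - F x = M x · log (1 + h / x) + O(h (h + 1) / x)`. Taking `h = δ x` and dividing by `x`
gives `|M x| / x · log (1 + δ) ≤ o(1) + δ² + δ / x`, so `limsup |M x| / x = O(δ)` for every `δ > 0`.
-/

open MeasureTheory

section PartialSums

variable {a : ℕ → ℝ}

theorem abs_sum_Ioc_le_of_abs_le_one (ha : ∀ n, |a n| ≤ 1) (m k : ℕ) :
    |∑ n ∈ Ioc m k, a n| ≤ ((k - m : ℕ) : ℝ) :=
  calc |∑ n ∈ Ioc m k, a n| ≤ ∑ n ∈ Ioc m k, |a n| := abs_sum_le_sum_abs _ _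
    _ ≤ ∑ _n ∈ Ioc m k, (1 : ℝ) := sum_le_sum fun n _ => ha n
    _ = ((k - m : ℕ) : ℝ) := by simp

theorem abs_sum_Icc_floor_sub_le (ha : ∀ n, |a n| ≤ 1) {x y : ℝ} (hx : 0 ≤ x) (hxy : x ≤ y) :
    |∑ n ∈ Icc 1 ⌊y⌋₊, a n - ∑ n ∈ Icc 1 ⌊x⌋₊, a n| ≤ y - x + 1 := by
  have hfloor : ⌊x⌋₊ ≤ ⌊y⌋₊ := Nat.floor_le_floor hxy
  have hdiff : ∑ n ∈ Icc 1 ⌊y⌋₊, a n - ∑ n ∈ Icc 1 ⌊x⌋₊, a n = ∑ n ∈ Ioc ⌊x⌋₊ ⌊y⌋₊, a n := by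
    rw [← zero_add 1, Icc_add_one_left_eq_Ioc, Icc_add_one_left_eq_Ioc,
      ← sum_Ioc_consecutive a (Nat.zero_le _) hfloor, add_sub_cancel_left]
  rw [hdiff]
  refine (abs_sum_Ioc_le_of_abs_le_one ha _ _).trans ?_
  rw [Nat.cast_sub hfloor]
  linarith [(Nat.floor_le (hx.trans hxy) : (⌊y⌋₊ : ℝ) ≤ y), Nat.sub_one_lt_floor x]

theorem intervalIntegrable_sum_Icc_floor_div (ha : ∀ n, |a n| ≤ 1) {b : ℝ} (hb : 1 ≤ b) :
    IntervalIntegrable (fun y => (∑ n ∈ Icc 1 ⌊y⌋₊, a n) / y) volume 1 b := by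
  refine (intervalIntegrable_const (c := (2 : ℝ))).mono_fun ?_ ?_
  · have hS : Measurable fun y : ℝ => ∑ n ∈ Icc 1 ⌊y⌋₊, a n :=
      (measurable_from_nat (f := fun k => ∑ n ∈ Icc 1 k, a n)).comp Nat.measurable_floor
    exact (hS.div measurable_id).aestronglyMeasurable
  · filter_upwards [ae_restrict_mem measurableSet_uIoc] with y hy
    rw [Set.uIoc_of_le hb] at hy
    have hy0 : 0 < y := zero_lt_one.trans hy.1
    have hS : |∑ n ∈ Icc 1 ⌊y⌋₊, a n| ≤ y + 1 := by
      simpa using abs_sum_Icc_floor_sub_le ha le_rfl hy0.le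
    rw [Real.norm_ofNat, Real.norm_eq_abs, abs_div, abs_of_pos hy0, div_le_iff₀ hy0]
    linarith [hy.1]

end PartialSums

section Tauberian

variable {f : ℝ → ℝ}

theorem abs_mul_log_le_abs_integral_div_add {x z : ℝ} (hx : 0 < x) (hxz : x ≤ z)
    (hint : IntervalIntegrable (fun y => f y / y) volume x z)
    (hf : ∀ y ∈ Set.Icc x z, |f y - f x| ≤ y - x + 1) :
    |f x| * Real.log (z / x) ≤ |∫ y in x..z, f y / y| + (z - x + 1) / x * (z - x) := by
  have hz : 0 < z := hx.trans_le hxz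
  have hinv : IntervalIntegrable (fun y => f x * y⁻¹) volume x z :=
    (intervalIntegrable_inv_iff.2 (Or.inr (Set.notMem_uIcc_of_lt hx hz))).const_mul _
  have hsplit : ∫ y in x..z, f y / y = (∫ y in x..z, (f y - f x) / y) + f x * Real.log (z / x) := by
    have hsub : ∫ y in x..z, (f y - f x) / y = (∫ y in x..z, f y / y) - ∫ y in x..z, f x * y⁻¹ := by
      rw [← intervalIntegral.integral_sub hint hinv]
      congr 1; ext y; ring
    rw [hsub, intervalIntegral.integral_const_mul, integral_inv_of_pos hx hz]
    ring
  have herr : |∫ y in x..z, (f y - f x) / y| ≤ (z - x + 1) / x * (z - x) := by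
    have := intervalIntegral.norm_integral_le_of_norm_le_const (C := (z - x + 1) / x)
      (a := x) (b := z) (f := fun y => (f y - f x) / y) fun y hy => by
        rw [Set.uIoc_of_le hxz] at hy
        have hy0 : 0 < y := hx.trans hy.1
        rw [Real.norm_eq_abs, abs_div, abs_of_pos hy0]
        exact div_le_div₀ (by linarith [hy.2]) ((hf y (Set.Ioc_subset_Icc_self hy)).trans
          (by linarith [hy.2])) hx hy.1.le
    rwa [Real.norm_eq_abs, abs_of_nonneg (sub_nonneg.2 hxz)] at this
  have hlog_nonneg : 0 ≤ Real.log (z / x) := Real.log_nonneg ((one_le_div hx).2 hxz)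
  calc
    |f x| * Real.log (z / x) = |f x * Real.log (z / x)| := by
      rw [abs_mul, abs_of_nonneg hlog_nonneg]
    _ = |(∫ y in x..z, f y / y) - ∫ y in x..z, (f y - f x) / y| := by
      rw [hsplit, add_sub_cancel_left]
    _ ≤ |∫ y in x..z, f y / y| + |∫ y in x..z, (f y - f x) / y| := abs_sub _ _
    _ ≤ _ := by gcongr

variable {δ : ℝ}

theorem half_le_log_one_add (hδ : 0 < δ) (hδ1 : δ ≤ 1) : δ / 2 ≤ Real.log (1 + δ) := by
  refine le_trans ?_ (Real.one_sub_inv_le_log_of_pos (by linarith))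
  rw [inv_eq_one_div, one_sub_div (by positivity), add_sub_cancel_left]
  gcongr
  linarith

theorem eventually_abs_div_lt_of_tendsto_integral_div
    (hint : ∀ b, 1 ≤ b → IntervalIntegrable (fun y => f y / y) volume 1 b)
    (hf : ∀ x y, 1 ≤ x → x ≤ y → |f y - f x| ≤ y - x + 1)
    (hlog : Tendsto (fun x => (∫ y in (1 : ℝ)..x, f y / y) / x) atTop (nhds 0))
    (hδ : 0 < δ) (hδ1 : δ ≤ 1) :
    ∀ᶠ x in atTop, |f x / x| < 4 * δ := by
  set G := fun x => (∫ y in (1 : ℝ)..x, f y / y) / x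
  have hR : Tendsto (fun x => (1 + δ) * |G ((1 + δ) * x)| + |G x| + δ / x) atTop (nhds 0) := by
    have hGz : Tendsto (fun x => G ((1 + δ) * x)) atTop (nhds 0) :=
      hlog.comp (tendsto_id.const_mul_atTop (by linarith))
    simpa using ((hGz.abs.const_mul (1 + δ)).add hlog.abs).add
      (tendsto_const_nhds.div_atTop tendsto_id)
  filter_upwards [hR.eventually_lt_const (by positivity : (0 : ℝ) < δ ^ 2), eventually_ge_atTop 1]
    with x hRx hx
  have hx0 : 0 < x := by linarith
  set z := (1 + δ) * x
  have hxz : x ≤ z := le_mul_of_one_le_left hx0.le (by linarith)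
  have hz : 1 ≤ z := hx.trans hxz
  have hkey := abs_mul_log_le_abs_integral_div_add hx0 hxz ((hint x hx).symm.trans (hint z hz))
    fun y hy => hf x y hx hy.1
  have hF : ∀ t, 0 < t → |∫ y in (1 : ℝ)..t, f y / y| = t * |G t| := fun t ht => by
    simp only [G, abs_div, abs_of_pos ht]
    field_simp
  have hI : |∫ y in x..z, f y / y| ≤ x * ((1 + δ) * |G z| + |G x|) := by
    rw [← intervalIntegral.integral_interval_sub_left (hint z hz) (hint x hx)]
    refine (abs_sub _ _).trans (le_of_eq ?_)
    rw [hF z (by linarith), hF x hx0]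
    ring
  have hzx : z / x = 1 + δ := mul_div_cancel_right₀ _ hx0.ne'
  have herr : (z - x + 1) / x * (z - x) = x * (δ / x + δ ^ 2) := by field_simp; ring
  rw [hzx, herr] at hkey
  have hfx : |f x| * (δ / 2) < x * δ ^ 2 * 2 := by
    calc |f x| * (δ / 2) ≤ |f x| * Real.log (1 + δ) := by
          gcongr; exact half_le_log_one_add hδ hδ1
      _ ≤ x * ((1 + δ) * |G z| + |G x| + δ / x) + x * δ ^ 2 := by linarith
      _ < x * δ ^ 2 + x * δ ^ 2 := by gcongr
      _ = x * δ ^ 2 * 2 := by ring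
  rw [abs_div, abs_of_pos hx0, div_lt_iff₀ hx0]
  nlinarith

theorem tendsto_div_atTop_of_tendsto_integral_div
    (hint : ∀ b, 1 ≤ b → IntervalIntegrable (fun y => f y / y) volume 1 b)
    (hf : ∀ x y, 1 ≤ x → x ≤ y → |f y - f x| ≤ y - x + 1)
    (hlog : Tendsto (fun x => (∫ y in (1 : ℝ)..x, f y / y) / x) atTop (nhds 0)) :
    Tendsto (fun x => f x / x) atTop (nhds 0) := by
  refine Metric.tendsto_nhds.2 fun ε hε => ?_
  filter_upwards [eventually_abs_div_lt_of_tendsto_integral_div hint hf hlog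
    (δ := min 1 (ε / 4)) (by positivity) (min_le_left _ _)] with x hx
  rw [Real.dist_0_eq_abs]
  linarith [min_le_right 1 (ε / 4)]

end Tauberian

theorem mertens_from_log_average
    (M : ℝ → ℝ)
    (hM : ∀ y, M y = ∑ n ∈ Finset.Icc 1 ⌊y⌋₊, (μ n : ℝ))
    (hlog : Tendsto (fun x : ℝ => (∫ y in (1:ℝ)..x, M y / y) / x) atTop (nhds 0)) :
    Tendsto (fun x : ℝ => M x / x) atTop (nhds 0) := by
  have hμ : ∀ n, |(μ n : ℝ)| ≤ 1 := fun n => by exact_mod_cast abs_moebius_le_one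
  obtain rfl : M = fun y => ∑ n ∈ Icc 1 ⌊y⌋₊, (μ n : ℝ) := funext hM
  exact tendsto_div_atTop_of_tendsto_integral_div
    (fun b hb => intervalIntegrable_sum_Icc_floor_div hμ hb)
    (fun x y hx hxy => abs_sum_Icc_floor_sub_le hμ (by linarith) hxy) hlog
end
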